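/- arXiv:1701.08354 — 3 statements merged into one kernel-verified Lean document; each statement's English description precedes it below -/
import Mathlib

section
/- For a Poisson energy arrival process with rate μ_H > 0 and threshold τ₁ ≥ 0, the average age of the one-threshold policy, given by Δ̄(τ₁) = (1/2)·(τ₁² + (2/μ_H² + 2τ₁/μ_H)·e^{-μ_H τ₁}) / (τ₁ + (1/μ_H)·e^{-μ_H τ₁}), is minimized at τ₁ = 2W(1/√2)/μ_H, where W is the Lambert W function, and the minimum value equals 2W(1/√2)/μ_H. -/
/-!
In units of `1/μ` (put `s = μ τ`) the average age becomes
`s ↦ (s² + (2 + 2s) e^{-s}) / (2 (s + e^{-s}))`. Its minimum value `t` is characterised by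
`e^{-t} = t²/2`, i.e. `t = 2 W(1/√2)`. The lower bound `t` comes from the tangent line of
`e^{-s}` at `s = t`: with `x = s - t`, the numerator minus `2t` times the denominator is at
least `x² - t² + t² (1 + x) (1 - x) = x² (1 - t²) ≥ 0`, and `t ≤ 1` also makes `1 + x ≥ 0`.
-/

open Real

noncomputable def scaledAvgAge (s : ℝ) : ℝ :=
  (s ^ 2 + (2 + 2 * s) * exp (-s)) / (2 * (s + exp (-s)))

lemma avgAge_formula_eq_scaledAvgAge {μ : ℝ} (hμ : μ ≠ 0) (τ : ℝ) :
    (τ ^ 2 + (2 / μ ^ 2 + 2 * τ / μ) * exp (-μ * τ)) / (2 * (τ + (1 / μ) * exp (-μ * τ))) =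
      scaledAvgAge (μ * τ) / μ := by
  rw [scaledAvgAge, neg_mul]
  field_simp

lemma le_one_of_exp_neg_eq {t : ℝ} (ht : 0 ≤ t) (hexp : exp (-t) = t ^ 2 / 2) : t ≤ 1 := by
  have h : exp (-t) * (1 + t) ≤ 1 := by
    calc exp (-t) * (1 + t) ≤ exp (-t) * exp t := by
          gcongr; linarith [add_one_le_exp t]
      _ = 1 := by rw [← exp_add, neg_add_cancel, exp_zero]
  rw [hexp] at h
  nlinarith

lemma two_mul_add_exp_neg_le {t s : ℝ} (ht : 0 ≤ t) (hexp : exp (-t) = t ^ 2 / 2) (hs : 0 ≤ s) :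
    2 * t * (s + exp (-s)) ≤ s ^ 2 + (2 + 2 * s) * exp (-s) := by
  have ht1 := le_one_of_exp_neg_eq ht hexp
  have htangent : t ^ 2 / 2 * (1 - (s - t)) ≤ exp (-s) := by
    calc t ^ 2 / 2 * (1 - (s - t)) ≤ exp (-t) * exp (-(s - t)) := by
          rw [hexp]; gcongr; linarith [add_one_le_exp (-(s - t))]
      _ = exp (-s) := by rw [← exp_add]; ring_nf
  nlinarith [mul_le_mul_of_nonneg_left htangent (by linarith : 0 ≤ 1 + (s - t)),
    mul_nonneg (sq_nonneg (s - t)) (by nlinarith : 0 ≤ 1 - t ^ 2)]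

lemma le_scaledAvgAge {t s : ℝ} (ht : 0 ≤ t) (hexp : exp (-t) = t ^ 2 / 2) (hs : 0 ≤ s) :
    t ≤ scaledAvgAge s := by
  rw [scaledAvgAge, le_div_iff₀ (by positivity)]
  linarith [two_mul_add_exp_neg_le ht hexp hs]

lemma scaledAvgAge_eq_self {t : ℝ} (ht : 0 ≤ t) (hexp : exp (-t) = t ^ 2 / 2) :
    scaledAvgAge t = t := by
  rw [scaledAvgAge, div_eq_iff (by positivity), hexp]
  ring

lemma exp_neg_two_mul_eq_of_mul_exp_eq {w : ℝ} (hw : w * exp w = 1 / √2) :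
    exp (-(2 * w)) = (2 * w) ^ 2 / 2 := by
  have hsq : (w * exp w) ^ 2 = 1 / 2 := by rw [hw, div_pow, one_pow, sq_sqrt zero_le_two]
  have hinv : exp (-(2 * w)) * exp w ^ 2 = 1 := by
    rw [← exp_nat_mul, ← exp_add]; norm_num
  calc exp (-(2 * w)) = exp (-(2 * w)) * (2 * (w * exp w) ^ 2) := by rw [hsq]; ring
    _ = (2 * w) ^ 2 / 2 := by linear_combination (2 * w ^ 2) * hinv

/-- For Poisson energy arrivals with rate `μ > 0`, the average age of the
one-threshold policy is minimized at `τ₁ = 2 W(1/√2) / μ` with minimum value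
`2 W(1/√2) / μ`, where `W` is the principal Lambert W function. -/
theorem avg_age_minimized_at_lambertW
    (μ : ℝ) (hμ : 0 < μ)
    (W : ℝ → ℝ)
    (hW : ∀ x ≥ (0:ℝ), 0 ≤ W x ∧ W x * Real.exp (W x) = x)
    (avgAge : ℝ → ℝ)
    (havg : ∀ τ ≥ (0:ℝ), avgAge τ =
      (τ ^ 2 + (2 / μ ^ 2 + 2 * τ / μ) * Real.exp (-μ * τ)) /
        (2 * (τ + (1 / μ) * Real.exp (-μ * τ)))) :
    (∀ τ ≥ (0:ℝ), avgAge (2 * W (1 / Real.sqrt 2) / μ) ≤ avgAge τ) ∧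
      avgAge (2 * W (1 / Real.sqrt 2) / μ) = 2 * W (1 / Real.sqrt 2) / μ := by
  obtain ⟨hw0, hw⟩ := hW (1 / √2) (by positivity)
  set t := 2 * W (1 / √2)
  have ht : 0 ≤ t := by positivity
  have hexp : exp (-t) = t ^ 2 / 2 := exp_neg_two_mul_eq_of_mul_exp_eq hw
  have hmin : avgAge (t / μ) = t / μ := by
    rw [havg _ (by positivity), avgAge_formula_eq_scaledAvgAge hμ.ne', mul_div_cancel₀ t hμ.ne',
      scaledAvgAge_eq_self ht hexp]
  refine ⟨fun τ hτ => ?_, hmin⟩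
  rw [hmin, havg τ hτ, avgAge_formula_eq_scaledAvgAge hμ.ne']
  gcongr
  exact le_scaledAvgAge ht hexp (by positivity)
end

section
/- Let μ > 0 and define Δ̄(τ) = (τ² + (2/μ² + 2τ/μ)e^{-μτ}) / (2(τ + (1/μ)e^{-μτ})) for τ ≥ 0. Then any τ* > 0 that is a fixed point of Δ̄ (i.e., Δ̄(τ*) = τ*) is a global minimizer of Δ̄ on [0,∞). -/
/-!
Write `Δ̄ = N / D` with `D > 0` on `[0, ∞)`. A fixed point `τ* = Δ̄(τ*)` is a zero of
Dinkelbach's parametric objective `g = N - τ* D`, and `g'(τ) = 2 (τ - τ*) (1 - e^{-μτ})`, which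
for `τ ≥ 0` has the sign of `τ - τ*`. So `g ≥ g(τ*) = 0` on `[0, ∞)`, i.e. `Δ̄ ≥ τ* = Δ̄(τ*)`.
-/

open Real Set

noncomputable section

namespace AverageAge

def numerator (μ τ : ℝ) : ℝ :=
  τ ^ 2 + (2 / μ ^ 2 + 2 * τ / μ) * exp (-μ * τ)

def denominator (μ τ : ℝ) : ℝ :=
  2 * (τ + (1 / μ) * exp (-μ * τ))

def dinkelbachObjective (μ c τ : ℝ) : ℝ :=
  numerator μ τ - c * denominator μ τ

variable {μ : ℝ}

theorem denominator_pos (hμ : 0 < μ) {τ : ℝ} (hτ : 0 ≤ τ) : 0 < denominator μ τ := by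
  unfold denominator
  positivity

theorem hasDerivAt_dinkelbachObjective (hμ : μ ≠ 0) (c τ : ℝ) :
    HasDerivAt (dinkelbachObjective μ c) (2 * (τ - c) * (1 - exp (-μ * τ))) τ := by
  have hexp : HasDerivAt (fun τ => exp (-μ * τ)) (exp (-μ * τ) * -μ) τ := by
    simpa using ((hasDerivAt_id τ).const_mul (-μ)).exp
  have hN : HasDerivAt (numerator μ)
      (2 * τ + ((2 / μ) * exp (-μ * τ) + (2 / μ ^ 2 + 2 * τ / μ) * (exp (-μ * τ) * -μ))) τ :=
    ((hasDerivAt_pow 2 τ).add ((((hasDerivAt_id τ).const_mul (2 : ℝ)).div_const μ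
      |>.const_add (2 / μ ^ 2)).mul hexp)).congr_deriv (by simp)
  have hD : HasDerivAt (denominator μ) (2 * (1 + (1 / μ) * (exp (-μ * τ) * -μ))) τ :=
    ((hasDerivAt_id τ).add (hexp.const_mul (1 / μ))).const_mul 2
  refine (hN.sub (hD.const_mul c)).congr_deriv ?_
  field_simp
  ring

theorem isMinOn_dinkelbachObjective (hμ : 0 < μ) {c : ℝ} (hc : 0 ≤ c) :
    IsMinOn (dinkelbachObjective μ c) (Ici 0) c := by
  have hderiv τ := hasDerivAt_dinkelbachObjective hμ.ne' c τ
  have hdiff : Differentiable ℝ (dinkelbachObjective μ c) := fun τ => (hderiv τ).differentiableAt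
  have hexp_le {τ : ℝ} (hτ : 0 < τ) : exp (-μ * τ) ≤ 1 :=
    exp_le_one_iff.2 (by nlinarith)
  refine isMinOn_Ici_of_deriv hdiff.continuous.continuousAt hdiff.continuous.continuousAt
    hdiff.differentiableOn hdiff.differentiableOn ?_ ?_
  · rintro τ ⟨hτ0, hτc⟩
    rw [(hderiv τ).deriv]
    exact mul_nonpos_of_nonpos_of_nonneg (by linarith) (by linarith [hexp_le hτ0])
  · intro τ (hτc : c < τ)
    rw [(hderiv τ).deriv]
    exact mul_nonneg (by linarith) (by linarith [hexp_le (hc.trans_lt hτc)])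

end AverageAge

end

open AverageAge

/-- Any positive fixed point of the average-age function of the single-threshold
policy is a global minimizer on `[0, ∞)`. -/
theorem fixed_point_is_global_minimizer
    (μ : ℝ) (hμ : 0 < μ)
    (avgAge : ℝ → ℝ)
    (havg : ∀ τ ≥ (0:ℝ), avgAge τ =
      (τ ^ 2 + (2 / μ ^ 2 + 2 * τ / μ) * Real.exp (-μ * τ)) /
        (2 * (τ + (1 / μ) * Real.exp (-μ * τ))))
    (τstar : ℝ) (hτ : 0 < τstar) (hfix : avgAge τstar = τstar) :
    ∀ τ ≥ (0:ℝ), avgAge τstar ≤ avgAge τ := by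
  have havg' τ (hτ0 : 0 ≤ τ) : avgAge τ = numerator μ τ / denominator μ τ := havg τ hτ0
  have hzero : dinkelbachObjective μ τstar τstar = 0 := by
    rw [dinkelbachObjective, sub_eq_zero, ← div_eq_iff (denominator_pos hμ hτ.le).ne',
      ← havg' τstar hτ.le, hfix]
  intro τ hτ0
  have hmin : 0 ≤ dinkelbachObjective μ τstar τ :=
    hzero ▸ isMinOn_dinkelbachObjective hμ hτ.le (mem_Ici.2 hτ0)
  rw [hfix, havg' τ hτ0, le_div_iff₀ (denominator_pos hμ hτ0)]
  exact sub_nonneg.1 hmin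
end

section
/- The constant 2W(1/√2) satisfies 0.90 < 2W(1/√2) < 0.91; in particular, the optimal single-threshold policy achieves average age strictly less than that of the zero-wait policy, i.e., 2W(1/√2)/μ < 1/μ for all μ > 0. -/
/-!
Squaring `w e^w = 1/√2` shows that `v = 2 W(1/√2)` is the nonnegative root of `v² e^v = 2`.
Since `v ↦ v² e^v` is increasing on `[0, ∞)`, it suffices to check `0.90² e^0.90 < 2 < 0.91² e^0.91`,
which follows from Taylor bounds on `exp`.
-/

open Real

theorem pow_mul_exp_le_pow_mul_exp {a b : ℝ} (n : ℕ) (ha : 0 ≤ a) (hab : a ≤ b) :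
    a ^ n * exp a ≤ b ^ n * exp b :=
  mul_le_mul (pow_le_pow_left₀ ha hab n) (exp_le_exp.2 hab) (exp_pos a).le
    (pow_nonneg (ha.trans hab) n)

theorem lt_of_pow_mul_exp_lt_pow_mul_exp {a b : ℝ} {n : ℕ} (hb : 0 ≤ b)
    (h : a ^ n * exp a < b ^ n * exp b) : a < b :=
  lt_of_not_ge fun hba => (pow_mul_exp_le_pow_mul_exp n hb hba).not_gt h

theorem sq_mul_exp_two_mul_eq_two {w : ℝ} (hw : w * exp w = 1 / √2) :
    (2 * w) ^ 2 * exp (2 * w) = 2 := by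
  have hsq : (w * exp w) ^ 2 = 1 / 2 := by rw [hw, div_pow, sq_sqrt zero_le_two, one_pow]
  rw [two_mul w, exp_add]
  linear_combination 4 * hsq

theorem sq_mul_exp_ninety_hundredths_lt_two : (0.90 : ℝ) ^ 2 * exp 0.90 < 2 := by
  have h := exp_bound' (x := 0.90) (by norm_num) (by norm_num) (n := 5) (by norm_num)
  norm_num [Finset.sum_range_succ, Nat.factorial] at h
  linarith

theorem two_lt_sq_mul_exp_ninety_one_hundredths : 2 < (0.91 : ℝ) ^ 2 * exp 0.91 := by
  have h := sum_le_exp_of_nonneg (x := 0.91) (by norm_num) 4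
  norm_num [Finset.sum_range_succ, Nat.factorial] at h
  nlinarith

/-- `0.90 < 2 W(1/√2) < 0.91`; in particular the optimal single-threshold policy's
average age `2 W(1/√2)/μ` is strictly less than the zero-wait policy's `1/μ`. -/
theorem optimal_age_less_than_zero_wait
    (W : ℝ → ℝ)
    (hW : ∀ x ≥ (0:ℝ), 0 ≤ W x ∧ W x * Real.exp (W x) = x) :
    ((0.90 : ℝ) < 2 * W (1 / Real.sqrt 2) ∧ 2 * W (1 / Real.sqrt 2) < (0.91 : ℝ)) ∧
      ∀ μ : ℝ, 0 < μ → 2 * W (1 / Real.sqrt 2) / μ < 1 / μ := by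
  obtain ⟨hw₀, hw⟩ := hW (1 / √2) (by positivity)
  have hv := sq_mul_exp_two_mul_eq_two hw
  have hlo : (0.90 : ℝ) < 2 * W (1 / √2) :=
    lt_of_pow_mul_exp_lt_pow_mul_exp (by positivity) (hv ▸ sq_mul_exp_ninety_hundredths_lt_two)
  have hhi : 2 * W (1 / √2) < 0.91 :=
    lt_of_pow_mul_exp_lt_pow_mul_exp (by norm_num) (hv ▸ two_lt_sq_mul_exp_ninety_one_hundredths)
  exact ⟨⟨hlo, hhi⟩, fun μ hμ => div_lt_div_of_pos_right (by linarith) hμ⟩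
end
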